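/- Let N ≥ 2. An N×N Hermitian matrix X satisfies trace(φ_{m,n} φ_{m,n}* · X) = 0 for all m = 1,…,4 and n = 1,…,N−1 if and only if X[n,n] = 0 for all n = 1,…,N and X[n,n+1] = 0 (equivalently X[n+1,n] = 0) for all n = 1,…,N−1. (Lemma 4, part Φ: characterization of the null space of the measurement map A_Φ on Hermitian matrices.) -/

import Mathlib

/-!
`trace (φ φ* X) = φ* X φ`, and for `φ = φ_{m,n}` this is the quadratic form `a_m* Y a_m` of the
`2 × 2` block `Y` of `X` on the indices `n, n+1`, where `a_m ∈ ℂ²` is the `m`-th frame vector.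
These four forms determine `Y`: adding the forms for `(α, β)` and `(α, -β)`, resp. `(β, α)` and
`(-β, α)`, gives `α² Y₀₀ + |β|² Y₁₁` and `|β|² Y₀₀ + α² Y₁₁`, a system that is invertible since
`α⁴ ≠ |β|⁴`; subtracting them gives `α (β Y₀₁ + β̄ Y₁₀)` and `α (β̄ Y₀₁ + β Y₁₀)`, invertible since
`β² = i |β|²` is not real. So the measurements vanish iff every consecutive `2 × 2` block of `X`
vanishes, which for Hermitian `X` and `N ≥ 2` means the diagonal and superdiagonal vanish.
-/

open Complex Matrix MeasureTheory

noncomputable section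

/-- α = √((1 − 1/√3)/2) -/
def alph : ℂ := (Real.sqrt ((1 - 1/Real.sqrt 3)/2) : ℝ)

/-- β = e^{i5π/4}·√((1 + 1/√3)/2) -/
def beta : ℂ := Complex.exp (Complex.I * (5 * (Real.pi : ℂ) / 4)) *
  (Real.sqrt ((1 + 1/Real.sqrt 3)/2) : ℝ)

/-- the four frame vectors a₁ = (α,β), a₂ = (β,α), a₃ = (α,−β), a₄ = (−β,α) in ℂ² -/
def coef : Fin 4 → Fin 2 → ℂ := ![![alph, beta], ![beta, alph], ![alph, -beta], ![-beta, alph]]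

/-- inner product ⟨x,y⟩ = Σ x[n]·conj(y[n]) -/
def inn {N : ℕ} (x y : Fin N → ℂ) : ℂ := ∑ i, x i * (starRingEnd ℂ) (y i)

/-- Euclidean norm ‖x‖ = √⟨x,x⟩ -/
def nrm {N : ℕ} (x : Fin N → ℂ) : ℝ := Real.sqrt (inn x x).re

/-- outer product x y* -/
def outer {N : ℕ} (x y : Fin N → ℂ) : Matrix (Fin N) (Fin N) ℂ :=
  fun i j => x i * (starRingEnd ℂ) (y j)

/-- measurement vectors φ_{m,n} (0-based n: nonzero entries at positions n and n+1) -/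
def phiv (N : ℕ) (m : Fin 4) (n : ℕ) : Fin N → ℂ :=
  fun i => if (i : ℕ) = n then coef m 0 else if (i : ℕ) = n + 1 then coef m 1 else 0

/-- measurement vectors ψ_{m,n} (0-based n: nonzero entries at positions 0 and n+1) -/
def psiv (N : ℕ) (m : Fin 4) (n : ℕ) : Fin N → ℂ :=
  fun i => if (i : ℕ) = 0 then coef m 0 else if (i : ℕ) = n + 1 then coef m 1 else 0

/-- Hilbert–Schmidt inner product ⟨X,Y⟩ = trace(Y*X) -/
def hs {N : ℕ} (X Y : Matrix (Fin N) (Fin N) ℂ) : ℂ := Matrix.trace (Yᴴ * X)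

/-- Frobenius (Hilbert–Schmidt) norm -/
def frob {N : ℕ} (X : Matrix (Fin N) (Fin N) ℂ) : ℝ := Real.sqrt (Matrix.trace (Xᴴ * X)).re

/-- spectral norm (largest singular value) -/
def specNorm {N : ℕ} (A : Matrix (Fin N) (Fin N) ℂ) : ℝ :=
  sSup {r : ℝ | ∃ v : Fin N → ℂ, nrm v ≤ 1 ∧ r = nrm (A.mulVec v)}

open scoped ComplexConjugate

theorem star_single_add_single_dotProduct_mulVec {ι R : Type*} [Fintype ι] [DecidableEq ι]
    [CommSemiring R] [StarRing R] (X : Matrix ι ι R) (p q : ι) (w : Fin 2 → R) :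
    star (Pi.single p (w 0) + Pi.single q (w 1)) ⬝ᵥ X *ᵥ (Pi.single p (w 0) + Pi.single q (w 1))
      = star w ⬝ᵥ X.submatrix ![p, q] ![p, q] *ᵥ w := by
  simp only [star_add, ← Pi.single_star, add_dotProduct, mulVec_add, dotProduct_add,
    single_dotProduct, mulVec_single]
  simp only [Pi.smul_apply, col_apply, MulOpposite.smul_eq_mul_unop, MulOpposite.unop_op,
    dotProduct, Pi.star_apply, mulVec, submatrix_apply, Fin.sum_univ_two, cons_val_zero,
    cons_val_one, cons_val_fin_one]
  ring

theorem trace_outer_mul {N : ℕ} (x y : Fin N → ℂ) (X : Matrix (Fin N) (Fin N) ℂ) :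
    trace (outer x y * X) = star y ⬝ᵥ X *ᵥ x := by
  simp only [trace, diag, mul_apply, outer, dotProduct, mulVec, Finset.mul_sum]
  rw [Finset.sum_comm]
  refine Finset.sum_congr rfl fun i _ => Finset.sum_congr rfl fun j _ => ?_
  simp only [Pi.star_apply, RCLike.star_def]
  ring

def frameVec (a b : ℂ) : Fin 4 → Fin 2 → ℂ := ![![a, b], ![b, a], ![a, -b], ![-b, a]]

theorem coef_eq_frameVec : coef = frameVec alph beta := rfl

theorem forall_frameVec_quadForm_eq_zero_iff {a b : ℂ} (ha : conj a = a) (ha0 : a ≠ 0)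
    (hdiag : a ^ 4 ≠ (b * conj b) ^ 2) (hoff : b ^ 2 ≠ conj b ^ 2) (Y : Matrix (Fin 2) (Fin 2) ℂ) :
    (∀ m, star (frameVec a b m) ⬝ᵥ Y *ᵥ frameVec a b m = 0) ↔ Y = 0 := by
  refine ⟨fun h => ?_, fun h m => by simp [h]⟩
  have e0 := h 0
  have e1 := h 1
  have e2 := h 2
  have e3 := h 3
  simp only [dotProduct, frameVec, cons_val_zero, Pi.star_apply, RCLike.star_def, mulVec,
    cons_val', cons_val_fin_one, Fin.sum_univ_two, cons_val_one, ha, cons_val, mul_neg, map_neg,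
    neg_mul] at e0 e1 e2 e3
  have hd1 : a ^ 2 * Y 0 0 + b * conj b * Y 1 1 = 0 := by linear_combination (e0 + e2) / 2
  have hd2 : b * conj b * Y 0 0 + a ^ 2 * Y 1 1 = 0 := by linear_combination (e1 + e3) / 2
  have ho1 : a * (b * Y 0 1 + conj b * Y 1 0) = 0 := by linear_combination (e0 - e2) / 2
  have ho2 : a * (conj b * Y 0 1 + b * Y 1 0) = 0 := by linear_combination (e1 - e3) / 2
  have h00 : (a ^ 4 - (b * conj b) ^ 2) * Y 0 0 = 0 := by
    linear_combination a ^ 2 * hd1 - b * conj b * hd2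
  have h11 : (a ^ 4 - (b * conj b) ^ 2) * Y 1 1 = 0 := by
    linear_combination a ^ 2 * hd2 - b * conj b * hd1
  have h01 : a * (b ^ 2 - conj b ^ 2) * Y 0 1 = 0 := by
    linear_combination b * ho1 - conj b * ho2
  have h10 : a * (b ^ 2 - conj b ^ 2) * Y 1 0 = 0 := by
    linear_combination b * ho2 - conj b * ho1
  have hdiag' := sub_ne_zero.2 hdiag
  have hoff' := mul_ne_zero ha0 (sub_ne_zero.2 hoff)
  ext i j
  fin_cases i <;> fin_cases j
  · exact (mul_eq_zero.1 h00).resolve_left hdiag'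
  · exact (mul_eq_zero.1 h01).resolve_left hoff'
  · exact (mul_eq_zero.1 h10).resolve_left hoff'
  · exact (mul_eq_zero.1 h11).resolve_left hdiag'

theorem conj_alph : conj alph = alph := Complex.conj_ofReal _

theorem one_div_sqrt_three_lt_one : 1 / √3 < 1 := by
  rw [div_lt_one (by positivity), Real.lt_sqrt zero_le_one]
  norm_num

theorem alph_ne_zero : alph ≠ 0 := by
  refine Complex.ofReal_ne_zero.2 (Real.sqrt_pos.2 ?_).ne'
  linarith [one_div_sqrt_three_lt_one]

theorem alph_sq : alph ^ 2 = (((1 - 1 / √3) / 2 : ℝ) : ℂ) := by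
  rw [alph, ← Complex.ofReal_pow, Real.sq_sqrt]
  linarith [one_div_sqrt_three_lt_one]

theorem beta_eq : beta = ((-(√2 / 2) * √((1 + 1 / √3) / 2) : ℝ) : ℂ) * (1 + I) := by
  have hangle : I * (5 * (Real.pi : ℂ) / 4) = ((Real.pi / 4 + Real.pi : ℝ) : ℂ) * I := by
    push_cast; ring
  rw [beta, hangle, Complex.exp_mul_I, ← Complex.ofReal_cos, ← Complex.ofReal_sin, Real.cos_add_pi,
    Real.sin_add_pi, Real.cos_pi_div_four, Real.sin_pi_div_four]
  push_cast
  ring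

theorem beta_mul_conj : beta * conj beta = (((1 + 1 / √3) / 2 : ℝ) : ℂ) := by
  have h : (0 : ℝ) ≤ (1 + 1 / √3) / 2 := by positivity
  rw [beta_eq, map_mul, Complex.conj_ofReal, map_add, map_one, Complex.conj_I]
  have h2 : (√2 : ℂ) ^ 2 = 2 := by exact_mod_cast Real.sq_sqrt (by norm_num : (0 : ℝ) ≤ 2)
  have h3 : (√((1 + 1 / √3) / 2) : ℂ) ^ 2 = (((1 + 1 / √3) / 2 : ℝ) : ℂ) := by
    exact_mod_cast Real.sq_sqrt h
  push_cast at h3 ⊢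
  linear_combination -((√2 : ℂ) ^ 2 * (√((1 + 1 / √3) / 2) : ℂ) ^ 2 / 4) * Complex.I_sq
    + (√((1 + 1 / √3) / 2) : ℂ) ^ 2 / 2 * h2 + h3

theorem beta_sq_ne_conj_sq : beta ^ 2 ≠ conj beta ^ 2 := by
  rw [beta_eq, map_mul, Complex.conj_ofReal, map_add, map_one, Complex.conj_I]
  have hc : (-(√2 / 2) * √((1 + 1 / √3) / 2) : ℝ) ≠ 0 :=
    mul_ne_zero (neg_ne_zero.2 (by positivity)) (by positivity)
  intro h
  refine mul_ne_zero (pow_ne_zero 2 (Complex.ofReal_ne_zero.2 hc))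
    (mul_ne_zero (by norm_num : (4 : ℂ) ≠ 0) Complex.I_ne_zero) ?_
  linear_combination h

theorem alph_pow_four_ne : alph ^ 4 ≠ (beta * conj beta) ^ 2 := by
  rw [show alph ^ 4 = (alph ^ 2) ^ 2 by ring, alph_sq, beta_mul_conj, ← Complex.ofReal_pow,
    ← Complex.ofReal_pow, Ne, Complex.ofReal_inj]
  have : 0 < 1 / √3 := by positivity
  nlinarith

def consecutivePair {N n : ℕ} (hn : n + 1 < N) : Fin 2 → Fin N :=
  ![⟨n, n.lt_of_succ_lt hn⟩, ⟨n + 1, hn⟩]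

theorem phiv_eq_single_add_single {N n : ℕ} (m : Fin 4) (hn : n + 1 < N) :
    phiv N m n =
      Pi.single ⟨n, n.lt_of_succ_lt hn⟩ (coef m 0) + Pi.single ⟨n + 1, hn⟩ (coef m 1) := by
  ext i
  simp only [phiv, Pi.add_apply, Pi.single_apply, Fin.ext_iff]
  split_ifs <;> first | omega | simp

theorem trace_outer_phiv_mul {N n : ℕ} (m : Fin 4) (hn : n + 1 < N)
    (X : Matrix (Fin N) (Fin N) ℂ) :
    trace (outer (phiv N m n) (phiv N m n) * X)
      = star (coef m) ⬝ᵥ X.submatrix (consecutivePair hn) (consecutivePair hn) *ᵥ coef m := by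
  rw [trace_outer_mul, phiv_eq_single_add_single m hn, star_single_add_single_dotProduct_mulVec]
  rfl

theorem forall_submatrix_consecutivePair_eq_zero_iff {N : ℕ} (hN : 2 ≤ N)
    {X : Matrix (Fin N) (Fin N) ℂ} (hX : X.IsHermitian) :
    (∀ n (hn : n + 1 < N), X.submatrix (consecutivePair hn) (consecutivePair hn) = 0) ↔
      ((∀ i : Fin N, X i i = 0) ∧
        ∀ (n : ℕ) (hn : n + 1 < N), X ⟨n, n.lt_of_succ_lt hn⟩ ⟨n + 1, hn⟩ = 0) := by
  constructor
  · intro h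
    refine ⟨fun i => ?_, fun n hn => congrFun (congrFun (h n hn) 0) 1⟩
    by_cases hi : (i : ℕ) + 1 < N
    · exact congrFun (congrFun (h i hi) 0) 0
    · obtain ⟨k, hk⟩ : ∃ k, (i : ℕ) = k + 1 := ⟨i - 1, by omega⟩
      have hkN : k + 1 < N := by omega
      obtain rfl : i = ⟨k + 1, hkN⟩ := Fin.ext hk
      exact congrFun (congrFun (h k hkN) 1) 1
  · rintro ⟨hdiag, hsuper⟩ n hn
    ext i j
    fin_cases i <;> fin_cases j
    · exact hdiag _
    · exact hsuper n hn
    · exact (hX.apply _ _).symm.trans (by simp [consecutivePair, hsuper n hn])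
    · exact hdiag _

/-- Lemma 4 (part Φ): a Hermitian matrix X lies in the null space of A_Φ iff its
diagonal entries and its first super-diagonal entries vanish. -/
theorem null_space_Phi (N : ℕ) (hN : 2 ≤ N) (X : Matrix (Fin N) (Fin N) ℂ)
    (hX : X.IsHermitian) :
    (∀ (m : Fin 4) (n : ℕ), n + 1 < N →
        Matrix.trace (outer (phiv N m n) (phiv N m n) * X) = 0) ↔
    ((∀ i : Fin N, X i i = 0) ∧
      ∀ (n : ℕ) (hn : n + 1 < N), X ⟨n, by omega⟩ ⟨n + 1, hn⟩ = 0) := by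
  have hblock : ∀ n (hn : n + 1 < N), (∀ m, trace (outer (phiv N m n) (phiv N m n) * X) = 0) ↔
      X.submatrix (consecutivePair hn) (consecutivePair hn) = 0 := fun n hn => by
    simp only [trace_outer_phiv_mul _ hn, coef_eq_frameVec]
    exact forall_frameVec_quadForm_eq_zero_iff conj_alph alph_ne_zero alph_pow_four_ne
      beta_sq_ne_conj_sq _
  rw [← forall_submatrix_consecutivePair_eq_zero_iff hN hX]
  exact ⟨fun h n hn => (hblock n hn).1 fun m => h m n hn,
    fun h m n hn => (hblock n hn).2 (h n hn) m⟩
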